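/- Assume that the intersection of any two parabolic subgroups of A[B_{n+1}] is a parabolic subgroup of A[B_{n+1}]. Then the intersection of any two parabolic subgroups of the Euclidean braid group A[Ã_n] is a parabolic subgroup of A[Ã_n]. -/

import Mathlib

/-- Defining relations of the Artin group of type `B_{n+1}` on generators indexed by
`Fin (n+1)`; index `i` represents the paper's generator `r_{i+1}`. -/
def BRels (n : ℕ) : Set (FreeGroup (Fin (n + 1))) :=
  { x | ∃ i j : Fin (n + 1), (i : ℕ) + 1 = j ∧ (j : ℕ) < n ∧
      x = .of i * .of j * .of i * (.of j * .of i * .of j)⁻¹ } ∪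
  { x | n ≥ 1 ∧ x = .of (⟨n - 1, by omega⟩ : Fin (n + 1)) * .of ⟨n, by omega⟩ *
      .of ⟨n - 1, by omega⟩ * .of ⟨n, by omega⟩ *
      (.of (⟨n, by omega⟩ : Fin (n + 1)) * .of ⟨n - 1, by omega⟩ *
        .of ⟨n, by omega⟩ * .of ⟨n - 1, by omega⟩)⁻¹ } ∪
  { x | ∃ i j : Fin (n + 1), (i : ℕ) + 2 ≤ j ∧ x = .of i * .of j * (.of j * .of i)⁻¹ }

/-- The Artin group of type `B_{n+1}`. -/
abbrev ArtinB (n : ℕ) := PresentedGroup (BRels n)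

/-- The standard generator `r_{i+1}` of `A[B_{n+1}]`. -/
def rB (n : ℕ) (i : Fin (n + 1)) : ArtinB n := PresentedGroup.of i

/-- `ρ = r_1 r_2 ⋯ r_{n+1}`. -/
def ρB (n : ℕ) : ArtinB n := (List.ofFn fun i => rB n i).prod

/-- Defining relations of the Euclidean braid group `A[Ã_n]` on generators `t_0, …, t_n`
indexed cyclically by `Fin (n+1)`. -/
def ARels (n : ℕ) : Set (FreeGroup (Fin (n + 1))) :=
  { x | ∃ i : Fin (n + 1), x = .of i * .of (i + 1) * .of i *
      (.of (i + 1) * .of i * .of (i + 1))⁻¹ } ∪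
  { x | ∃ i j : Fin (n + 1), j ≠ i + 1 ∧ i ≠ j + 1 ∧ i ≠ j ∧
      x = .of i * .of j * (.of j * .of i)⁻¹ }

/-- The Euclidean braid group `A[Ã_n]`. -/
abbrev ArtinA (n : ℕ) := PresentedGroup (ARels n)

/-- The standard generator `t_i` of `A[Ã_n]`. -/
def tA (n : ℕ) (i : Fin (n + 1)) : ArtinA n := PresentedGroup.of i

/-- `r_0, r_1, …, r_n` in `A[B_{n+1}]`: for `i ≥ 1` this is the standard generator `r_i`,
and `r_0 = ρ r_n ρ⁻¹`. -/
def rcyc (n : ℕ) (i : Fin (n + 1)) : ArtinB n :=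
  if h : (i : ℕ) = 0 then ρB n * rB n ⟨n - 1, by omega⟩ * (ρB n)⁻¹
  else rB n ⟨(i : ℕ) - 1, by omega⟩

/-- A parabolic subgroup of `A[Ã_n]`: a conjugate of a subgroup generated by a subset of
the standard generators `t_0, …, t_n`. -/
def IsParabolicA (n : ℕ) (P : Subgroup (ArtinA n)) : Prop :=
  ∃ (g : ArtinA n) (X : Set (Fin (n + 1))),
    P = Subgroup.map (MulAut.conj g).toMonoidHom (Subgroup.closure (tA n '' X))

/-- A parabolic subgroup of `A[B_{n+1}]`: a conjugate of a subgroup generated by a subset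
of the standard generators `r_1, …, r_{n+1}`. -/
def IsParabolicB (n : ℕ) (P : Subgroup (ArtinB n)) : Prop :=
  ∃ (h : ArtinB n) (Y : Set (Fin (n + 1))),
    P = Subgroup.map (MulAut.conj h).toMonoidHom (Subgroup.closure (rB n '' Y))


/-!
The Kent–Peifer map `φ : A[Ã_n] → A[B_{n+1}]`, `t_i ↦ r_i` with `r_0 = ρ r_n ρ⁻¹`, is a
homomorphism because conjugation by `ρ = r_1 ⋯ r_{n+1}` permutes `r_0, …, r_n` cyclically, so
every defining relation of `A[Ã_n]` is a `ρ`-conjugate of a relation among `r_1, …, r_n`.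
The map `σ : A[B_{n+1}] → A[Ã_n] ⋊ ℤ`, where the generator `z` of `ℤ` rotates the `t_i`, given by
`r_i ↦ t_i` for `i ≤ n` and `r_{n+1} ↦ (t_1 ⋯ t_n)⁻¹ z`, satisfies `σ ∘ φ = inl`; in particular
`φ` is injective.

A proper parabolic subgroup of `A[Ã_n]` misses some `t_a`; since `φ(t_{i+a}) = ρ^a φ(t_i) ρ^{-a}`,
its image under `φ` is a conjugate of a subgroup generated by some of `r_1, …, r_n`. Conversely,
if `φ(K) = h ⟨r_Y⟩ h⁻¹`, then `r_{n+1} ∉ Y` because `σ(r_{n+1})` has `ℤ`-component `z` while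
`σ ∘ φ` lands in `A[Ã_n]`; writing `σ(h) = g z^m`, the subgroup `σ(φ(K)) = K` is
`g ⟨t_{Y+m}⟩ g⁻¹`. Hence `φ(P ∩ Q) = φ(P) ∩ φ(Q)` is parabolic whenever `P`, `Q` are proper,
and so is `P ∩ Q`.
-/

open Fin.NatCast

section BraidChain

variable {G : Type*} [Monoid G]

def chainProd (s : ℕ → G) (l : ℕ) : G := ((List.range l).map s).prod

@[simp] lemma chainProd_zero (s : ℕ → G) : chainProd s 0 = 1 := rfl

lemma chainProd_succ (s : ℕ → G) (l : ℕ) : chainProd s (l + 1) = chainProd s l * s l := by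
  simp [chainProd, List.range_succ]

lemma chainProd_succ' (s : ℕ → G) (l : ℕ) :
    chainProd s (l + 1) = s 0 * chainProd (fun j => s (j + 1)) l := by
  simp [chainProd, List.range_succ_eq_map, Function.comp_def]

lemma map_chainProd {H F : Type*} [Monoid H] [FunLike F G H] [MonoidHomClass F G H] (f : F)
    (s : ℕ → G) (l : ℕ) : f (chainProd s l) = chainProd (fun j => f (s j)) l := by
  simp [chainProd, map_list_prod, Function.comp_def]

lemma chainProd_congr {s s' : ℕ → G} {l : ℕ} (h : ∀ j < l, s j = s' j) :
    chainProd s l = chainProd s' l := by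
  unfold chainProd
  congr 1
  exact List.map_congr_left fun j hj => h j (List.mem_range.1 hj)

lemma Commute.chainProd_right {s : ℕ → G} {l : ℕ} {x : G} (h : ∀ j < l, Commute x (s j)) :
    Commute x (chainProd s l) :=
  Commute.list_prod_right _ _ <| by simpa using h

structure IsBraidChain (s : ℕ → G) (l : ℕ) : Prop where
  braid : ∀ i, i + 2 ≤ l → s i * s (i + 1) * s i = s (i + 1) * s i * s (i + 1)
  comm : ∀ i j, i + 2 ≤ j → j < l → Commute (s i) (s j)

namespace IsBraidChain

variable {s : ℕ → G} {l : ℕ}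

lemma mono (hs : IsBraidChain s l) {l' : ℕ} (h : l' ≤ l) : IsBraidChain s l' :=
  ⟨fun i hi => hs.braid i (by omega), fun i j hij hj => hs.comm i j hij (by omega)⟩

lemma chainProd_mul (hs : IsBraidChain s l) {i : ℕ} (hi : i + 2 ≤ l) :
    chainProd s l * s i = s (i + 1) * chainProd s l := by
  induction l, hi using Nat.le_induction with
  | base =>
    have hc : Commute (s (i + 1)) (chainProd s i) :=
      Commute.chainProd_right fun j hj => (hs.comm j (i + 1) (by omega) (by omega)).symm
    rw [chainProd_succ, chainProd_succ, mul_assoc, mul_assoc, mul_assoc, ← mul_assoc (s i),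
      hs.braid i le_rfl, ← mul_assoc, ← mul_assoc, ← hc.eq]
    simp only [mul_assoc]
  | succ l hl ih =>
    rw [chainProd_succ, mul_assoc, ← (hs.comm i l hl (by omega)).eq, ← mul_assoc,
      ih (hs.mono (by omega)), mul_assoc]

lemma chainProd_mul_chainProd (hs : IsBraidChain s l) {k : ℕ} (hk : k < l) :
    chainProd s l * chainProd s k = chainProd (fun j => s (j + 1)) k * chainProd s l := by
  induction k with
  | zero => simp
  | succ k ih =>
    rw [chainProd_succ, chainProd_succ, ← mul_assoc, ih (by omega), mul_assoc,
      hs.chainProd_mul (by omega), mul_assoc]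

lemma chainProd_mul_self (hs : IsBraidChain s (l + 1)) :
    chainProd s (l + 1) * chainProd s (l + 1) = s 0 * chainProd s (l + 1) * chainProd s l := by
  conv_lhs => enter [1]; rw [chainProd_succ']
  rw [mul_assoc, ← hs.chainProd_mul_chainProd (Nat.lt_succ_self l), mul_assoc]

lemma chainProd_sq_mul (hs : IsBraidChain s (l + 1)) :
    chainProd s (l + 1) ^ 2 * s l = s 0 * chainProd s (l + 1) ^ 2 :=
  calc chainProd s (l + 1) ^ 2 * s l = s 0 * chainProd s (l + 1) * (chainProd s l * s l) := by
        rw [sq, hs.chainProd_mul_self, mul_assoc]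
    _ = s 0 * chainProd s (l + 1) ^ 2 := by rw [← chainProd_succ, mul_assoc, sq]

end IsBraidChain

end BraidChain

section Conj

variable {G H : Type*} [Group G] [Group H]

lemma Subgroup.map_conj_map_conj (g h : G) (K : Subgroup G) :
    (K.map (MulAut.conj h).toMonoidHom).map (MulAut.conj g).toMonoidHom =
      K.map (MulAut.conj (g * h)).toMonoidHom := by
  rw [Subgroup.map_map, map_mul]
  rfl

lemma Subgroup.map_map_conj (f : G →* H) (g : G) (K : Subgroup G) :
    (K.map (MulAut.conj g).toMonoidHom).map f = (K.map f).map (MulAut.conj (f g)).toMonoidHom := by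
  rw [Subgroup.map_map, Subgroup.map_map]
  congr 1
  ext x
  simp

namespace SemidirectProduct

variable {N : Type*} [Group N] {φ : G →* MulAut N}

lemma inr_mul_inl (g : G) (x : N) : (inr g * inl x : N ⋊[φ] G) = inl (φ g x) * inr g := by
  rw [inl_aut, map_inv, inv_mul_cancel_right]

lemma inr_mul_inl_mul (g : G) (x : N) (y : N ⋊[φ] G) :
    inr g * (inl x * y) = inl (φ g x) * (inr g * y) := by
  rw [← mul_assoc, inr_mul_inl, mul_assoc]

lemma map_conj_inr_map_inl (g : G) (S : Subgroup N) :
    (S.map (inl : N →* N ⋊[φ] G)).map (MulAut.conj (inr g)).toMonoidHom =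
      (S.map (φ g).toMonoidHom).map inl := by
  rw [Subgroup.map_map, Subgroup.map_map]
  congr 1
  ext x <;> simp [inl_aut]

end SemidirectProduct

end Conj

section ArtinB

variable {n : ℕ}

lemma rB_braid {i : ℕ} (hi : i + 2 ≤ n) :
    rB n i * rB n ↑(i + 1) * rB n i = rB n ↑(i + 1) * rB n i * rB n ↑(i + 1) := by
  have h := PresentedGroup.mk_eq_mk_of_mul_inv_mem (rels := BRels n) <|
    Or.inl (Or.inl ⟨(i : Fin (n + 1)), ((i + 1 : ℕ) : Fin (n + 1)),
      by rw [Fin.val_cast_of_lt (by omega), Fin.val_cast_of_lt (by omega)],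
      by rw [Fin.val_cast_of_lt (by omega)]; omega, rfl⟩)
  simp only [map_mul] at h
  exact h

lemma rB_commute {i j : ℕ} (hij : i + 2 ≤ j) (hj : j ≤ n) : Commute (rB n i) (rB n j) := by
  have h := PresentedGroup.mk_eq_mk_of_mul_inv_mem (rels := BRels n) <|
    Or.inr ⟨(i : Fin (n + 1)), (j : Fin (n + 1)),
      by rw [Fin.val_cast_of_lt (by omega), Fin.val_cast_of_lt (by omega)]; omega, rfl⟩
  simp only [map_mul] at h
  exact h

lemma rB_four (hn : 1 ≤ n) :
    rB n ↑(n - 1) * rB n (Fin.last n) * rB n ↑(n - 1) * rB n (Fin.last n) =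
      rB n (Fin.last n) * rB n ↑(n - 1) * rB n (Fin.last n) * rB n ↑(n - 1) := by
  have h := PresentedGroup.mk_eq_mk_of_mul_inv_mem (rels := BRels n) <| Or.inl (Or.inr ⟨hn, rfl⟩)
  simp only [map_mul, ← Fin.natCast_eq_mk, Fin.natCast_eq_last] at h
  exact h

lemma rB_isBraidChain : IsBraidChain (fun j : ℕ => rB n j) n :=
  ⟨fun _ hi => rB_braid hi, fun _ _ hij hj => rB_commute hij hj.le⟩

lemma rhoB_eq : ρB n = chainProd (fun j : ℕ => rB n j) n * rB n (Fin.last n) := by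
  rw [← Fin.natCast_eq_last, ← chainProd_succ, ρB, chainProd, List.ofFn_eq_map,
    ← List.map_coe_finRange_eq_range, List.map_map]
  simp only [Function.comp_def, Fin.cast_val_eq_self]

lemma rhoB_mul_rB {i : ℕ} (hi : i + 2 ≤ n) : ρB n * rB n i = rB n ↑(i + 1) * ρB n := by
  have hc : Commute (rB n (Fin.last n)) (rB n i) := by
    rw [← Fin.natCast_eq_last]; exact (rB_commute (by omega) le_rfl).symm
  rw [rhoB_eq, mul_assoc, hc.eq, ← mul_assoc, rB_isBraidChain.chainProd_mul hi, mul_assoc]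

-- With `δ = W a`, `ρ = δ b`, both sides equal `δ² (b a b)`: on the left by the four-term
-- relation, on the right by `δ² = r_1 δ W`.
lemma rhoB_sq_mul (hn : 2 ≤ n) : ρB n ^ 2 * rB n ↑(n - 1) = rB n 0 * ρB n ^ 2 := by
  obtain ⟨l, rfl⟩ : ∃ l, n = l + 1 := ⟨n - 1, by omega⟩
  set W := chainProd (fun j : ℕ => rB (l + 1) j) l
  set δ := chainProd (fun j : ℕ => rB (l + 1) j) (l + 1)
  set a := rB (l + 1) ↑(l + 1 - 1)
  set b := rB (l + 1) (Fin.last (l + 1))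
  have hδ : δ = W * a := chainProd_succ _ _
  have hbW : Commute b W := Commute.chainProd_right fun j hj => by
    rw [show b = rB (l + 1) ↑(l + 1) by rw [Fin.natCast_eq_last]]
    exact (rB_commute (by omega) le_rfl).symm
  have hsq : δ * δ = rB (l + 1) 0 * δ * W := by
    simpa using rB_isBraidChain.chainProd_mul_self
  have hfour : b * a * b * a = a * b * a * b := (rB_four (by omega)).symm
  have hρ : ρB (l + 1) = δ * b := rhoB_eq
  calc ρB (l + 1) ^ 2 * a = W * a * W * (b * a * b * a) := by
        rw [hρ, sq, hδ]; simp only [mul_assoc]; rw [← mul_assoc b W, hbW.eq]; simp only [mul_assoc]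
    _ = δ * δ * (b * a * b) := by rw [hfour, hδ]; simp only [mul_assoc]
    _ = rB (l + 1) 0 * ρB (l + 1) ^ 2 := by
        rw [hsq, hρ, sq, hδ]; simp only [mul_assoc]; rw [← mul_assoc b W, hbW.eq]
        simp only [mul_assoc]

end ArtinB

section KentPeifer

variable {n : ℕ}

lemma rcyc_zero : rcyc n 0 = ρB n * rB n ↑(n - 1) * (ρB n)⁻¹ := by
  rw [rcyc, dif_pos (show ((0 : Fin (n + 1)) : ℕ) = 0 from rfl),
    Fin.natCast_eq_mk (show n - 1 < n + 1 by omega)]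

lemma rcyc_of_ne_zero {i : Fin (n + 1)} (hi : i ≠ 0) : rcyc n i = rB n (i - 1) := by
  rw [rcyc, dif_neg fun h : (i : ℕ) = 0 => hi (Fin.ext h)]
  congr 1
  ext
  rw [Fin.coe_sub_one, if_neg hi]

lemma rcyc_natCast_succ {j : ℕ} (hj : j < n) : rcyc n ↑(j + 1) = rB n j := by
  have hne : ((j + 1 : ℕ) : Fin (n + 1)) ≠ 0 := by
    rw [Ne, Fin.ext_iff, Fin.val_cast_of_lt (by omega)]; simp
  rw [rcyc_of_ne_zero hne, Nat.cast_succ, add_sub_cancel_right]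

lemma rhoB_conj_rcyc (hn : 2 ≤ n) (i : Fin (n + 1)) :
    MulAut.conj (ρB n) (rcyc n i) = rcyc n (i + 1) := by
  obtain ⟨k, hk, rfl⟩ : ∃ k ≤ n, (k : Fin (n + 1)) = i := ⟨i, by omega, Fin.cast_val_eq_self i⟩
  rw [MulAut.conj_apply]
  rcases k with _ | j
  · have h1 : rcyc n 1 = rB n 0 := by simpa using rcyc_natCast_succ (n := n) (j := 0) (by omega)
    calc ρB n * rcyc n 0 * (ρB n)⁻¹ = ρB n ^ 2 * rB n ↑(n - 1) * (ρB n ^ 2)⁻¹ := by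
          rw [rcyc_zero, sq, mul_inv_rev]; simp only [mul_assoc]
      _ = rcyc n (0 + 1) := by rw [rhoB_sq_mul hn, mul_inv_cancel_right, zero_add, h1]
  obtain rfl | hj := eq_or_lt_of_le hk
  · rw [Fin.natCast_eq_last, Fin.last_add_one, rcyc_zero, ← Fin.natCast_eq_last,
      rcyc_natCast_succ (by omega), Nat.add_sub_cancel]
  · rw [rcyc_natCast_succ (by omega), ← Nat.cast_succ, rcyc_natCast_succ hj, rhoB_mul_rB hj,
      mul_inv_cancel_right]

lemma rcyc_add_natCast (hn : 2 ≤ n) (i : Fin (n + 1)) (m : ℕ) :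
    rcyc n (i + m) = MulAut.conj (ρB n ^ m) (rcyc n i) := by
  induction m with
  | zero => simp
  | succ m ih =>
    rw [Nat.cast_succ, ← add_assoc, ← rhoB_conj_rcyc hn, ih, pow_succ', map_mul, MulAut.mul_apply]

lemma rcyc_add (hn : 2 ≤ n) (i k : Fin (n + 1)) :
    rcyc n (i + k) = MulAut.conj (ρB n ^ (k : ℕ)) (rcyc n i) := by
  simpa using rcyc_add_natCast hn i k

lemma rcyc_braid (hn : 2 ≤ n) (i : Fin (n + 1)) :
    rcyc n i * rcyc n (i + 1) * rcyc n i = rcyc n (i + 1) * rcyc n i * rcyc n (i + 1) := by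
  have h := rB_braid (n := n) (i := 0) (by omega)
  rw [← rcyc_natCast_succ (j := 0 + 1) (by omega), ← rcyc_natCast_succ (j := 0) (by omega)] at h
  have h' := congrArg (MulAut.conj (ρB n ^ ((i - 1 : Fin (n + 1)) : ℕ))) h
  simp only [map_mul, ← rcyc_add hn] at h'
  have e1 : ((0 + 1 : ℕ) : Fin (n + 1)) + (i - 1) = i := by push_cast; abel
  have e2 : ((0 + 1 + 1 : ℕ) : Fin (n + 1)) + (i - 1) = i + 1 := by
    push_cast; rw [← one_add_one_eq_two]; abel
  rwa [e1, e2] at h'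

-- `(rcyc i, rcyc j)` is the `ρ^(i-1)`-conjugate of `(rcyc 1, rcyc d)`, `d = j - i + 1`,
-- and `3 ≤ d ≤ n`.
lemma rcyc_commute (hn : 2 ≤ n) {i j : Fin (n + 1)} (h1 : j ≠ i + 1) (h2 : i ≠ j + 1)
    (h3 : i ≠ j) : Commute (rcyc n i) (rcyc n j) := by
  set d := j - (i - 1) with hd
  have hval : ∀ m : ℕ, d ≠ m → (d : ℕ) ≠ m := fun m h he => h (by rw [← he, Fin.cast_val_eq_self])
  have hd0 : (d : ℕ) ≠ 0 := hval 0 fun h => h2 (by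
    rw [Nat.cast_zero, sub_eq_zero] at h; rw [h]; abel)
  have hd1 : (d : ℕ) ≠ 1 := hval 1 fun h => h3 (by
    rw [Nat.cast_one, sub_eq_iff_eq_add] at h; rw [h]; abel)
  have hd2 : (d : ℕ) ≠ 2 := hval 2 fun h => h1 (by
    rw [sub_eq_iff_eq_add] at h; rw [h]; push_cast; rw [← one_add_one_eq_two]; abel)
  have h := rB_commute (n := n) (i := 0) (j := (d : ℕ) - 1) (by omega) (by omega)
  rw [← rcyc_natCast_succ (j := 0) (by omega), ← rcyc_natCast_succ (by omega),
    Nat.sub_add_cancel (by omega), Fin.cast_val_eq_self] at h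
  have h' := h.map (MulAut.conj (ρB n ^ ((i - 1 : Fin (n + 1)) : ℕ)))
  rw [← rcyc_add hn, ← rcyc_add hn] at h'
  have e1 : ((0 + 1 : ℕ) : Fin (n + 1)) + (i - 1) = i := by push_cast; abel
  have e2 : d + (i - 1) = j := by rw [hd]; abel
  rwa [e1, e2] at h'

noncomputable def kentPeifer (hn : 2 ≤ n) : ArtinA n →* ArtinB n :=
  PresentedGroup.toGroup (f := rcyc n) <| by
    rintro r (⟨i, rfl⟩ | ⟨i, j, h1, h2, h3, rfl⟩) <;>
      simp only [map_mul, map_inv, FreeGroup.lift_apply_of, mul_inv_eq_one]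
    · exact rcyc_braid hn i
    · exact (rcyc_commute hn h1 h2 h3).eq

lemma kentPeifer_tA (hn : 2 ≤ n) (i : Fin (n + 1)) : kentPeifer hn (tA n i) = rcyc n i :=
  PresentedGroup.toGroup.of _

end KentPeifer

section ArtinA

variable {n : ℕ}

lemma tA_braid (i : Fin (n + 1)) :
    tA n i * tA n (i + 1) * tA n i = tA n (i + 1) * tA n i * tA n (i + 1) := by
  have h := PresentedGroup.mk_eq_mk_of_mul_inv_mem (rels := ARels n) <| Or.inl ⟨i, rfl⟩
  simp only [map_mul] at h
  exact h

lemma tA_commute {i j : Fin (n + 1)} (h1 : j ≠ i + 1) (h2 : i ≠ j + 1) (h3 : i ≠ j) :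
    Commute (tA n i) (tA n j) := by
  have h := PresentedGroup.mk_eq_mk_of_mul_inv_mem (rels := ARels n) <|
    Or.inr ⟨i, j, h1, h2, h3, rfl⟩
  simp only [map_mul] at h
  exact h

lemma tA_natCast_commute {a b : ℕ} (ha : 1 ≤ a) (hab : a + 2 ≤ b) (hb : b ≤ n) :
    Commute (tA n a) (tA n b) := by
  have hval : ∀ {c d : ℕ}, c ≤ n → d ≤ n → c ≠ d → (c : Fin (n + 1)) ≠ d := fun hc hd h he =>
    h (by simpa [Fin.val_cast_of_lt (Nat.lt_succ_of_le hc),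
      Fin.val_cast_of_lt (Nat.lt_succ_of_le hd)] using congrArg Fin.val he)
  refine tA_commute ?_ ?_ (hval (by omega) hb (by omega))
  · rw [← Nat.cast_succ]; exact hval hb (by omega) (by omega)
  · rw [← Nat.cast_succ]
    obtain rfl | hb' := eq_or_lt_of_le hb
    · rw [Fin.natCast_self]; exact hval (c := a) (d := 0) (by omega) (by omega) (by omega)
    · exact hval (by omega) (by omega) (by omega)

noncomputable def shiftA (n : ℕ) (c : Fin (n + 1)) : ArtinA n →* ArtinA n :=
  PresentedGroup.toGroup (f := fun i => tA n (i + c)) <| by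
    rintro r (⟨i, rfl⟩ | ⟨i, j, h1, h2, h3, rfl⟩) <;>
      simp only [map_mul, map_inv, FreeGroup.lift_apply_of, mul_inv_eq_one]
    · rw [add_right_comm]; exact tA_braid (i + c)
    · refine (tA_commute ?_ ?_ ?_).eq
      · rw [add_right_comm]; exact fun h => h1 (add_right_cancel h)
      · rw [add_right_comm]; exact fun h => h2 (add_right_cancel h)
      · exact fun h => h3 (add_right_cancel h)

lemma shiftA_tA (c i : Fin (n + 1)) : shiftA n c (tA n i) = tA n (i + c) :=
  PresentedGroup.toGroup.of _

noncomputable def rotate (n : ℕ) : MulAut (ArtinA n) :=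
  (shiftA n 1).toMulEquiv (shiftA n (-1))
    (PresentedGroup.ext fun i => by
      change shiftA n (-1) (shiftA n 1 (tA n i)) = tA n i
      rw [shiftA_tA, shiftA_tA, add_neg_cancel_right])
    (PresentedGroup.ext fun i => by
      change shiftA n 1 (shiftA n (-1) (tA n i)) = tA n i
      rw [shiftA_tA, shiftA_tA, neg_add_cancel_right])

lemma rotate_tA (i : Fin (n + 1)) : rotate n (tA n i) = tA n (i + 1) := shiftA_tA 1 i

lemma rotate_inv_tA (i : Fin (n + 1)) : (rotate n)⁻¹ (tA n i) = tA n (i - 1) := by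
  rw [MulAut.inv_def, MulEquiv.symm_apply_eq, rotate_tA, sub_add_cancel]

lemma rotate_zpow_tA (k : ℤ) (i : Fin (n + 1)) :
    (rotate n ^ k) (tA n i) = tA n (i + k • 1) := by
  induction k using Int.induction_on generalizing i with
  | zero => simp
  | succ m ih =>
    rw [zpow_add_one, MulAut.mul_apply, rotate_tA, ih, add_smul, one_smul]; abel_nf
  | pred m ih =>
    rw [zpow_sub_one, MulAut.mul_apply, rotate_inv_tA, ih, sub_smul, one_smul]; abel_nf

def tAChain (n : ℕ) : ArtinA n := chainProd (fun j : ℕ => tA n ↑(j + 1)) n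

lemma tA_succ_isBraidChain : IsBraidChain (fun j : ℕ => tA n ↑(j + 1)) n where
  braid i _ := by simpa only [← Nat.cast_succ] using tA_braid (n := n) ↑(i + 1)
  comm _ _ hij hj := tA_natCast_commute (by omega) (by omega) (by omega)

lemma tAChain_sq_mul (hn : 1 ≤ n) :
    tAChain n ^ 2 * tA n (Fin.last n) = tA n 1 * tAChain n ^ 2 := by
  obtain ⟨l, rfl⟩ : ∃ l, n = l + 1 := ⟨n - 1, by omega⟩
  simpa [tAChain, ← Fin.natCast_eq_last] using tA_succ_isBraidChain.chainProd_sq_mul (l := l)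

lemma tAChain_mul_tA {i : Fin (n + 1)} (hi : (i : ℕ) + 2 ≤ n) :
    tAChain n * tA n (i + 1) = tA n (i + 1 + 1) * tAChain n := by
  have h : tAChain n * tA n ↑(i + 1 : ℕ) = tA n ↑(i + 1 + 1 : ℕ) * tAChain n :=
    tA_succ_isBraidChain.chainProd_mul hi
  simpa only [Nat.cast_succ, Fin.cast_val_eq_self] using h

lemma tAChain_eq_mul (hn : 1 ≤ n) :
    tAChain n = tA n 1 * chainProd (fun j : ℕ => tA n ↑(j + 2)) (n - 1) := by
  obtain ⟨l, rfl⟩ : ∃ l, n = l + 1 := ⟨n - 1, by omega⟩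
  rw [tAChain, chainProd_succ', Nat.add_sub_cancel, zero_add, Nat.cast_one]

lemma rotate_tAChain (hn : 1 ≤ n) :
    rotate n (tAChain n) = chainProd (fun j : ℕ => tA n ↑(j + 2)) (n - 1) * tA n 0 := by
  obtain ⟨l, rfl⟩ : ∃ l, n = l + 1 := ⟨n - 1, by omega⟩
  rw [tAChain, map_chainProd, chainProd_succ, Nat.add_sub_cancel, ← Fin.natCast_self]
  simp only [rotate_tA, ← Nat.cast_succ]

-- The `A[Ã_n]`-component of the four-term relation between the images of `r_n` and `r_{n+1}`
-- in `A[Ã_n] ⋊ ℤ`, after moving all `z`'s to the right.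
lemma rotate_four_relation (hn : 1 ≤ n) :
    tA n (Fin.last n) * (tAChain n)⁻¹ * rotate n (tA n (Fin.last n)) * rotate n (tAChain n)⁻¹ =
      (tAChain n)⁻¹ * rotate n (tA n (Fin.last n)) * rotate n (tAChain n)⁻¹ *
        rotate n (rotate n (tA n (Fin.last n))) := by
  have hv := tAChain_eq_mul hn
  have hrv := rotate_tAChain hn
  generalize chainProd (fun j : ℕ => tA n ↑(j + 2)) (n - 1) = u at hv hrv
  have hsq := tAChain_sq_mul hn
  rw [sq] at hsq
  have h1 : u * tAChain n * tA n (Fin.last n) = tA n 1 * (u * tAChain n) :=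
    calc u * tAChain n * tA n (Fin.last n)
        = (tA n 1)⁻¹ * (tAChain n * tAChain n * tA n (Fin.last n)) := by
          nth_rewrite 2 [hv]; group
      _ = tA n 1 * (u * tAChain n) := by
          rw [hsq, inv_mul_cancel_left]; nth_rewrite 1 [hv]; group
  have ht : tA n (Fin.last n) = (u * tAChain n)⁻¹ * (tA n 1 * (u * tAChain n)) := by
    rw [← h1]; group
  rw [map_inv, hrv, rotate_tA, Fin.last_add_one, rotate_tA, zero_add, ht]
  group

end ArtinA

section RotExt

open SemidirectProduct

variable {n : ℕ}

noncomputable def rotateHom (n : ℕ) : Multiplicative ℤ →* MulAut (ArtinA n) :=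
  zpowersHom _ (rotate n)

lemma rotateHom_ofAdd_one : rotateHom n (Multiplicative.ofAdd 1) = rotate n := by
  simp [rotateHom]

lemma rotateHom_tA (m : Multiplicative ℤ) (i : Fin (n + 1)) :
    rotateHom n m (tA n i) = tA n (i + Multiplicative.toAdd m • 1) := by
  rw [rotateHom, zpowersHom_apply, rotate_zpow_tA]

abbrev ArtinA.RotExt (n : ℕ) := ArtinA n ⋊[rotateHom n] Multiplicative ℤ

-- `r_{n+1} ↦ (t_1 ⋯ t_n)⁻¹ z` is forced by asking `ρ = r_1 ⋯ r_{n+1} ↦ z`.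
noncomputable def toRotExtGen (n : ℕ) (i : Fin (n + 1)) : ArtinA.RotExt n :=
  if i = Fin.last n then inl (tAChain n)⁻¹ * inr (Multiplicative.ofAdd 1)
  else inl (tA n (i + 1))

lemma toRotExtGen_of_ne_last {i : Fin (n + 1)} (hi : i ≠ Fin.last n) :
    toRotExtGen n i = inl (tA n (i + 1)) := if_neg hi

lemma toRotExtGen_last :
    toRotExtGen n (Fin.last n) = inl (tAChain n)⁻¹ * inr (Multiplicative.ofAdd 1) :=
  if_pos rfl

lemma toRotExtGen_four (hn : 1 ≤ n) :
    toRotExtGen n ⟨n - 1, by omega⟩ * toRotExtGen n (Fin.last n) *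
        toRotExtGen n ⟨n - 1, by omega⟩ * toRotExtGen n (Fin.last n) =
      toRotExtGen n (Fin.last n) * toRotExtGen n ⟨n - 1, by omega⟩ *
        toRotExtGen n (Fin.last n) * toRotExtGen n ⟨n - 1, by omega⟩ := by
  have hprev : (⟨n - 1, by omega⟩ : Fin (n + 1)) + 1 = Fin.last n := by
    ext; rw [Fin.val_add_one_of_lt (by simp [Fin.lt_def]; omega)]; simp; omega
  rw [toRotExtGen_of_ne_last (by simp [Fin.ext_iff]; omega), hprev, toRotExtGen_last]
  have key := congrArg (fun y => (inl y * (inr (Multiplicative.ofAdd 1) *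
    inr (Multiplicative.ofAdd 1)) : ArtinA.RotExt n)) (rotate_four_relation hn)
  rw [← rotateHom_ofAdd_one] at key
  simp only [map_mul, mul_assoc] at key ⊢
  simp only [inr_mul_inl_mul, inr_mul_inl]
  simpa only [mul_assoc] using key

noncomputable def toRotExt (n : ℕ) : ArtinB n →* ArtinA.RotExt n :=
  PresentedGroup.toGroup (f := toRotExtGen n) <| by
    rintro r ((⟨i, j, h1, h2, rfl⟩ | ⟨hn, rfl⟩) | ⟨i, j, h, rfl⟩) <;>
      simp only [map_mul, map_inv, FreeGroup.lift_apply_of, mul_inv_eq_one]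
    · obtain rfl : j = i + 1 := by
        ext; rw [Fin.val_add_one_of_lt (by rw [Fin.lt_def]; simp; omega)]; omega
      rw [toRotExtGen_of_ne_last (Fin.lt_last_iff_ne_last.1 (show (i : ℕ) < n by omega)),
        toRotExtGen_of_ne_last (Fin.lt_last_iff_ne_last.1 h2), ← map_mul, ← map_mul, ← map_mul,
        ← map_mul, tA_braid]
    · exact toRotExtGen_four hn
    · rw [toRotExtGen_of_ne_last (Fin.lt_last_iff_ne_last.1 (show (i : ℕ) < n by omega))]
      by_cases hj : j = Fin.last n
      · subst hj
        have hv : tA n (i + 1) * (tAChain n)⁻¹ = (tAChain n)⁻¹ * tA n (i + 1 + 1) := by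
          rw [eq_inv_mul_iff_mul_eq, ← mul_assoc, tAChain_mul_tA (by simpa using h),
            mul_inv_cancel_right]
        rw [toRotExtGen_last, ← mul_assoc, ← map_mul, hv, mul_assoc, inr_mul_inl,
          rotateHom_ofAdd_one, rotate_tA, map_mul, mul_assoc]
      · have hc := tA_natCast_commute (n := n) (a := i + 1) (b := j + 1) (by omega) (by omega)
          (Fin.val_lt_last hj)
        simp only [Nat.cast_succ, Fin.cast_val_eq_self] at hc
        rw [toRotExtGen_of_ne_last hj, ← map_mul, ← map_mul, hc.eq]

lemma toRotExt_rB (i : Fin (n + 1)) : toRotExt n (rB n i) = toRotExtGen n i :=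
  PresentedGroup.toGroup.of _

lemma rightHom_toRotExt_rB_last :
    rightHom (toRotExt n (rB n (Fin.last n))) = Multiplicative.ofAdd 1 := by
  rw [toRotExt_rB, toRotExtGen_last, map_mul, rightHom_inl, rightHom_inr, one_mul]

lemma toRotExt_rhoB : toRotExt n (ρB n) = inr (Multiplicative.ofAdd 1) := by
  have hδ : toRotExt n (chainProd (fun j : ℕ => rB n j) n) = inl (tAChain n) := by
    rw [tAChain, map_chainProd, map_chainProd]
    refine chainProd_congr fun j hj => ?_
    rw [toRotExt_rB, toRotExtGen_of_ne_last (Fin.lt_last_iff_ne_last.1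
      (show ((j : Fin (n + 1)) : ℕ) < n by rwa [Fin.val_cast_of_lt (by omega)])), Nat.cast_succ]
  rw [rhoB_eq, map_mul, hδ, toRotExt_rB, toRotExtGen_last, ← mul_assoc, ← map_mul,
    mul_inv_cancel, map_one, one_mul]

lemma toRotExt_comp_kentPeifer (hn : 2 ≤ n) : (toRotExt n).comp (kentPeifer hn) = inl := by
  refine PresentedGroup.ext fun i => ?_
  change toRotExt n (kentPeifer hn (tA n i)) = inl (tA n i)
  rw [kentPeifer_tA]
  by_cases hi : i = 0
  · have hlast : ((n - 1 : ℕ) : Fin (n + 1)) + 1 = Fin.last n := by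
      rw [← Nat.cast_succ, Nat.succ_eq_add_one, Nat.sub_add_cancel (by omega), Fin.natCast_eq_last]
    rw [hi, rcyc_zero, map_mul, map_mul, map_inv, toRotExt_rhoB, toRotExt_rB,
      toRotExtGen_of_ne_last (Fin.lt_last_iff_ne_last.1
        (show ((n - 1 : ℕ) : Fin (n + 1)).val < n by rw [Fin.val_cast_of_lt (by omega)]; omega)),
      hlast, ← map_inv, ← inl_aut, rotateHom_ofAdd_one, rotate_tA, Fin.last_add_one]
  · have hne : i - 1 ≠ Fin.last n := fun h => hi (by rw [← sub_add_cancel i 1, h, Fin.last_add_one])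
    rw [rcyc_of_ne_zero hi, toRotExt_rB, toRotExtGen_of_ne_last hne, sub_add_cancel]

lemma toRotExt_kentPeifer (hn : 2 ≤ n) (x : ArtinA n) : toRotExt n (kentPeifer hn x) = inl x :=
  DFunLike.congr_fun (toRotExt_comp_kentPeifer hn) x

lemma kentPeifer_injective (hn : 2 ≤ n) : Function.Injective (kentPeifer hn) := fun x y h =>
  inl_injective (by rw [← toRotExt_kentPeifer hn, ← toRotExt_kentPeifer hn, h])

end RotExt

section Parabolic

open Subgroup SemidirectProduct

variable {n : ℕ}

lemma map_conj_closure_tA_univ (g : ArtinA n) :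
    (closure (tA n '' Set.univ)).map (MulAut.conj g).toMonoidHom = ⊤ := by
  rw [Set.image_univ, show Set.range (tA n) = Set.range PresentedGroup.of from rfl,
    PresentedGroup.closure_range_of]
  exact map_top_of_surjective _ (MulAut.conj g).surjective

lemma isParabolicB_map_kentPeifer (hn : 2 ≤ n) (g : ArtinA n) {X : Set (Fin (n + 1))}
    (hX : X ≠ Set.univ) :
    IsParabolicB n
      (((closure (tA n '' X)).map (MulAut.conj g).toMonoidHom).map (kentPeifer hn)) := by
  obtain ⟨a, ha⟩ := (Set.ne_univ_iff_exists_notMem X).1 hX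
  have hrcyc : rcyc n '' X =
      MulAut.conj (ρB n ^ (a : ℕ)) '' (rB n '' ((fun x => x - a - 1) '' X)) := by
    simp only [Set.image_image]
    refine Set.image_congr fun x hx => ?_
    have hxa : x - a ≠ 0 := sub_ne_zero.2 fun h => ha (h ▸ hx)
    rw [← rcyc_of_ne_zero hxa, ← rcyc_add hn, sub_add_cancel]
  refine ⟨kentPeifer hn g * ρB n ^ (a : ℕ), (fun x => x - a - 1) '' X, ?_⟩
  rw [map_map_conj, MonoidHom.map_closure, Set.image_image]
  simp only [kentPeifer_tA]
  rw [hrcyc, ← MulEquiv.coe_toMonoidHom, ← MonoidHom.map_closure, map_conj_map_conj]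

lemma isParabolicA_of_isParabolicB_map (hn : 2 ≤ n) {K : Subgroup (ArtinA n)}
    (hK : IsParabolicB n (K.map (kentPeifer hn))) : IsParabolicA n K := by
  obtain ⟨h, Y, hKY⟩ := hK
  have hY : ∀ y ∈ Y, y ≠ Fin.last n := by
    rintro y hy rfl
    obtain ⟨k, -, hk⟩ : MulAut.conj h (rB n (Fin.last n)) ∈ K.map (kentPeifer hn) :=
      hKY ▸ mem_map_of_mem _ (subset_closure ⟨_, hy, rfl⟩)
    have := congrArg (fun x => rightHom (toRotExt n x)) hk
    simp only [toRotExt_kentPeifer, rightHom_inl, MulAut.conj_apply, map_mul, map_inv,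
      rightHom_toRotExt_rB_last, mul_inv_cancel_comm] at this
    exact absurd this.symm (by decide)
  have hσY : toRotExt n '' (rB n '' Y) = inl '' (tA n '' ((· + 1) '' Y)) := by
    simp only [Set.image_image]
    exact Set.image_congr fun y hy => by rw [toRotExt_rB, toRotExtGen_of_ne_last (hY y hy)]
  set x := toRotExt n h
  set Z := (· + Multiplicative.toAdd x.right • 1) '' ((· + 1) '' Y)
  have hrot : (closure (tA n '' ((· + 1) '' Y))).map (rotateHom n x.right).toMonoidHom =
      closure (tA n '' Z) := by
    rw [MonoidHom.map_closure]
    simp only [Z, Set.image_image, MulEquiv.coe_toMonoidHom, rotateHom_tA]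
  refine ⟨x.left, Z, map_injective (inl_injective (φ := rotateHom n)) ?_⟩
  calc K.map inl = (K.map (kentPeifer hn)).map (toRotExt n) := by
        rw [map_map, toRotExt_comp_kentPeifer]
    _ = ((closure (tA n '' ((· + 1) '' Y))).map inl).map (MulAut.conj x).toMonoidHom := by
        rw [hKY, map_map_conj, MonoidHom.map_closure, hσY, ← MonoidHom.map_closure]
    _ = ((closure (tA n '' ((· + 1) '' Y))).map inl).map
          (MulAut.conj (inl x.left * inr x.right)).toMonoidHom := by
        rw [inl_left_mul_inr_right]
    _ = _ := by rw [← map_conj_map_conj, map_conj_inr_map_inl, hrot, map_map_conj]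

end Parabolic

/-- If the intersection of any two parabolic subgroups of `A[B_{n+1}]` is parabolic,
then the intersection of any two parabolic subgroups of `A[Ã_n]` is parabolic. -/
theorem stmt15 (n : ℕ) (hn : 2 ≤ n)
    (hB : ∀ P Q : Subgroup (ArtinB n), IsParabolicB n P → IsParabolicB n Q →
      IsParabolicB n (P ⊓ Q)) :
    ∀ P Q : Subgroup (ArtinA n), IsParabolicA n P → IsParabolicA n Q →
      IsParabolicA n (P ⊓ Q) := by
  rintro P Q ⟨g, X, rfl⟩ ⟨g', X', rfl⟩
  by_cases hX : X = Set.univ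
  · rw [hX, map_conj_closure_tA_univ, top_inf_eq]
    exact ⟨g', X', rfl⟩
  by_cases hX' : X' = Set.univ
  · rw [hX', map_conj_closure_tA_univ, inf_top_eq]
    exact ⟨g, X, rfl⟩
  apply isParabolicA_of_isParabolicB_map hn
  rw [Subgroup.map_inf _ _ _ (kentPeifer_injective hn)]
  exact hB _ _ (isParabolicB_map_kentPeifer hn g hX) (isParabolicB_map_kentPeifer hn g' hX')
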